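/- Let m : ℝ → (0,∞) be continuous, strictly decreasing on (−∞, 0) and strictly increasing on (0, ∞), and let M(t) = ∫₀ᵗ m(s) ds. Then the map t ↦ M⁻¹(t)/t is strictly decreasing on (0,∞) and strictly increasing on (−∞, 0), where M⁻¹ is the inverse of M. -/
import Mathlib

open MeasureTheory intervalIntegral Set

theorem stmt7 (m : ℝ → ℝ) (𝔪 : ℝ) (h𝔪 : 0 < 𝔪) (hm : Continuous m)
    (hpos : ∀ s, 𝔪 ≤ m s)
    (hdec : StrictAntiOn m (Set.Iio 0)) (hinc : StrictMonoOn m (Set.Ioi 0))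
    (M Minv : ℝ → ℝ)
    (hM : ∀ t, M t = ∫ s in (0 : ℝ)..t, m s)
    (hleft : Function.LeftInverse Minv M)
    (hright : Function.RightInverse Minv M) :
    StrictAntiOn (fun t => Minv t / t) (Set.Ioi (0 : ℝ)) ∧
    StrictMonoOn (fun t => Minv t / t) (Set.Iio (0 : ℝ)) := by
  have hInt : ∀ a b : ℝ, IntervalIntegrable m volume a b :=
    fun a b => hm.intervalIntegrable a b
  have hMsub : ∀ a b : ℝ, M b - M a = ∫ s in a..b, m s := by
    intro a b
    rw [hM, hM, ← intervalIntegral.integral_add_adjacent_intervals (hInt 0 a) (hInt a b)]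
    ring
  have hMono : StrictMono M := by
    intro a b hab
    have h := intervalIntegral_pos_of_pos_on (hInt a b)
      (fun x _ => lt_of_lt_of_le h𝔪 (hpos x)) hab
    have h2 := hMsub a b
    linarith
  have hM0 : M 0 = 0 := by rw [hM]; simp
  -- key estimate on positive side: M a < a * m a
  have key1 : ∀ a : ℝ, 0 < a → M a < a * m a := by
    intro a ha
    have h : 0 < ∫ u in (0:ℝ)..a, (m a - m u) := by
      apply intervalIntegral_pos_of_pos_on
      · exact (continuous_const.sub hm).intervalIntegrable 0 a
      · intro x hx
        exact sub_pos.mpr (hinc hx.1 ha hx.2)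
      · exact ha
    have heq : (∫ u in (0:ℝ)..a, (m a - m u)) = a * m a - M a := by
      rw [intervalIntegral.integral_sub (intervalIntegrable_const) (hInt 0 a),
        intervalIntegral.integral_const, hM]
      simp [smul_eq_mul]
    linarith
  -- key estimate on negative side: b * m b < M b
  have key2 : ∀ b : ℝ, b < 0 → b * m b < M b := by
    intro b hb
    have h : 0 < ∫ u in b..(0:ℝ), (m b - m u) := by
      apply intervalIntegral_pos_of_pos_on
      · exact (continuous_const.sub hm).intervalIntegrable b 0
      · intro x hx
        exact sub_pos.mpr (hdec hb hx.2 hx.1)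
      · exact hb
    have heq : (∫ u in b..(0:ℝ), (m b - m u)) = M b - b * m b := by
      have h1 : (∫ u in b..(0:ℝ), m u) = -M b := by
        have := hMsub b 0; linarith
      rw [intervalIntegral.integral_sub (intervalIntegrable_const) (hInt b 0),
        intervalIntegral.integral_const, h1]
      simp [smul_eq_mul]; ring
    linarith
  constructor
  · -- strictly anti on (0, ∞)
    intro t₁ h1 t₂ h2 h12
    simp only [Set.mem_Ioi] at h1 h2
    set a := Minv t₁ with ha_def
    set b := Minv t₂ with hb_def
    have hMa : M a = t₁ := hright t₁
    have hMb : M b = t₂ := hright t₂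
    have ha : 0 < a := by
      have : M 0 < M a := by rw [hM0, hMa]; exact h1
      exact hMono.lt_iff_lt.mp this
    have hab : a < b := by
      have : M a < M b := by rw [hMa, hMb]; exact h12
      exact hMono.lt_iff_lt.mp this
    have hlb : (b - a) * m a ≤ ∫ u in a..b, m u := by
      have hmle : ∀ x ∈ Set.Icc a b, (fun _ => m a) x ≤ m x := by
        intro x hx
        exact hinc.monotoneOn ha (lt_of_lt_of_le ha hx.1) hx.1
      have := intervalIntegral.integral_mono_on hab.le intervalIntegrable_const
        (hInt a b) hmle
      rwa [intervalIntegral.integral_const, smul_eq_mul] at this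
    have hIab := hMsub a b
    have hk := key1 a ha
    show b / t₂ < a / t₁
    rw [div_lt_div_iff₀ h2 h1, ← hMa, ← hMb]
    nlinarith [hk, hlb, hIab]
  · -- strictly mono on (-∞, 0)
    intro t₁ h1 t₂ h2 h12
    simp only [Set.mem_Iio] at h1 h2
    set a := Minv t₁ with ha_def
    set b := Minv t₂ with hb_def
    have hMa : M a = t₁ := hright t₁
    have hMb : M b = t₂ := hright t₂
    have hb : b < 0 := by
      have : M b < M 0 := by rw [hM0, hMb]; exact h2
      exact hMono.lt_iff_lt.mp this
    have hab : a < b := by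
      have : M a < M b := by rw [hMa, hMb]; exact h12
      exact hMono.lt_iff_lt.mp this
    have hlb : (b - a) * m b ≤ ∫ u in a..b, m u := by
      have hmle : ∀ x ∈ Set.Icc a b, (fun _ => m b) x ≤ m x := by
        intro x hx
        exact hdec.antitoneOn (lt_of_le_of_lt hx.2 hb) hb hx.2
      have := intervalIntegral.integral_mono_on hab.le intervalIntegrable_const
        (hInt a b) hmle
      rwa [intervalIntegral.integral_const, smul_eq_mul] at this
    have hIab := hMsub a b
    have hk := key2 b hb
    show a / t₁ < b / t₂
    rw [← neg_div_neg_eq a t₁, ← neg_div_neg_eq b t₂,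
      div_lt_div_iff₀ (by linarith) (by linarith), ← hMa, ← hMb]
    nlinarith [hk, hlb, hIab]
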